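/- arXiv:2111.10731 — 7 statements merged into one kernel-verified Lean document; each statement's English description precedes it below -/
import Mathlib

section
/- If G is a Godunova-Levin function on an interval V, i.e., G is nonnegative and G(ζm1 + (1-ζ)m2) ≤ (1/ζ)G(m1) + (1/(1-ζ))G(m2) for all m1, m2 ∈ V and ζ ∈ (0,1), and G is integrable on [m1, m2] ⊆ V with m1 < m2, then G((m1+m2)/2) ≤ (4/(m2-m1)) ∫_{m1}^{m2} G(x) dx. -/
open MeasureTheory intervalIntegral

/-
At ζ = 1/2 the Godunova–Levin inequality gives G((m1+m2)/2) ≤ 2 G(x) + 2 G(m1+m2-x) for every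
x ∈ [m1, m2], since x and its reflection m1+m2-x have midpoint (m1+m2)/2. Integrating over
[m1, m2], the reflection preserves the integral, so (m2-m1) G((m1+m2)/2) ≤ 4 ∫ G.
-/

lemma le_two_mul_add_two_mul_of_godunovaLevin {V : Set ℝ} {G : ℝ → ℝ}
    (hGL : ∀ a ∈ V, ∀ b ∈ V, ∀ ζ ∈ Set.Ioo (0:ℝ) 1,
      G (ζ * a + (1 - ζ) * b) ≤ (1 / ζ) * G a + (1 / (1 - ζ)) * G b)
    {a b : ℝ} (ha : a ∈ V) (hb : b ∈ V) :
    G ((a + b) / 2) ≤ 2 * G a + 2 * G b := by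
  have h := hGL a ha b hb (1 / 2) ⟨by norm_num, by norm_num⟩
  rw [show 1 / 2 * a + (1 - 1 / 2) * b = (a + b) / 2 by ring] at h
  norm_num at h
  exact h

lemma integral_comp_add_sub (f : ℝ → ℝ) (a b : ℝ) :
    ∫ x in a..b, f (a + b - x) = ∫ x in a..b, f x := by
  rw [integral_comp_sub_left, add_sub_cancel_right, add_sub_cancel_left]

lemma mul_le_two_mul_integral_of_le_add_comp_add_sub {f : ℝ → ℝ} {a b c : ℝ} (hab : a ≤ b)
    (hf : IntervalIntegrable f volume a b) (h : ∀ x ∈ Set.Icc a b, c ≤ f x + f (a + b - x)) :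
    (b - a) * c ≤ 2 * ∫ x in a..b, f x := by
  have hf_refl : IntervalIntegrable (fun x ↦ f (a + b - x)) volume a b := by
    simpa using (hf.comp_sub_left (a + b)).symm
  calc (b - a) * c = ∫ _ in a..b, c := by simp
    _ ≤ ∫ x in a..b, f x + f (a + b - x) :=
      integral_mono_on hab intervalIntegrable_const (hf.add hf_refl) h
    _ = 2 * ∫ x in a..b, f x := by
      rw [integral_add hf hf_refl, integral_comp_add_sub]
      ring

theorem godunova_levin_left_general (V : Set ℝ) (hV : Convex ℝ V) (G : ℝ → ℝ)
    (hGL : ∀ a ∈ V, ∀ b ∈ V, ∀ ζ ∈ Set.Ioo (0:ℝ) 1,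
      G (ζ * a + (1 - ζ) * b) ≤ (1 / ζ) * G a + (1 / (1 - ζ)) * G b)
    (m1 m2 : ℝ) (hm1 : m1 ∈ V) (hm2 : m2 ∈ V) (hlt : m1 < m2)
    (hint : IntervalIntegrable G volume m1 m2) :
    G ((m1 + m2) / 2) ≤ (4 / (m2 - m1)) * ∫ x in m1..m2, G x := by
  have hIcc : Set.Icc m1 m2 ⊆ V := hV.ordConnected.out hm1 hm2
  have hpointwise : ∀ x ∈ Set.Icc m1 m2,
      G ((m1 + m2) / 2) ≤ 2 * G x + 2 * G (m1 + m2 - x) := by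
    intro x hx
    have hx' : m1 + m2 - x ∈ Set.Icc m1 m2 := ⟨by linarith [hx.2], by linarith [hx.1]⟩
    have h := le_two_mul_add_two_mul_of_godunovaLevin hGL (hIcc hx) (hIcc hx')
    rwa [add_sub_cancel] at h
  have hbound := mul_le_two_mul_integral_of_le_add_comp_add_sub hlt.le (hint.const_mul 2)
    hpointwise
  rw [intervalIntegral.integral_const_mul] at hbound
  rw [div_mul_eq_mul_div, le_div_iff₀ (sub_pos.mpr hlt)]
  linarith

theorem godunova_levin_left (V : Set ℝ) (hV : Convex ℝ V) (G : ℝ → ℝ)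
    (hnonneg : ∀ x ∈ V, 0 ≤ G x)
    (hGL : ∀ a ∈ V, ∀ b ∈ V, ∀ ζ ∈ Set.Ioo (0:ℝ) 1,
      G (ζ * a + (1 - ζ) * b) ≤ (1 / ζ) * G a + (1 / (1 - ζ)) * G b)
    (m1 m2 : ℝ) (hm1 : m1 ∈ V) (hm2 : m2 ∈ V) (hlt : m1 < m2)
    (hint : IntervalIntegrable G volume m1 m2) :
    G ((m1 + m2) / 2) ≤ (4 / (m2 - m1)) * ∫ x in m1..m2, G x :=
  godunova_levin_left_general V hV G hGL m1 m2 hm1 hm2 hlt hint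
end

section
/- If G is a Godunova-Levin function on V and integrable on [m1, m2] ⊆ V with m1 < m2, then (1/(m2-m1)) ∫_{m1}^{m2} φ(x) G(x) dx ≤ (G(m1) + G(m2))/2, where φ(x) = (m2 - x)(x - m1)/(m2 - m1)². -/
/-!
Put `ζ = (x - m1) / (m2 - m1)`, so that `x = ζ m2 + (1 - ζ) m1` and the weight is
`φ(x) = ζ (1 - ζ)`. Multiplying the Godunova–Levin inequality by `ζ (1 - ζ)` bounds
`φ(x) G(x)` on `(m1, m2)` by the affine function `(1 - ζ) G(m2) + ζ G(m1)`, whose mean over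
`[m1, m2]` is `(G(m1) + G(m2)) / 2`.
-/

open MeasureTheory intervalIntegral Set

lemma mul_one_sub_mul_le_of_le_div_add_div {ζ u a b : ℝ} (hζ : ζ ∈ Ioo 0 1)
    (h : u ≤ 1 / ζ * a + 1 / (1 - ζ) * b) :
    ζ * (1 - ζ) * u ≤ (1 - ζ) * a + ζ * b := by
  obtain ⟨hζ0, hζ1⟩ := hζ
  have h1ζ : 0 < 1 - ζ := sub_pos.mpr hζ1
  calc ζ * (1 - ζ) * u ≤ ζ * (1 - ζ) * (1 / ζ * a + 1 / (1 - ζ) * b) := by gcongr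
    _ = (1 - ζ) * a + ζ * b := by field_simp

lemma integral_sub_mul_add_sub_mul_div (a b c d : ℝ) :
    ∫ x in a..b, ((b - x) * c + (x - a) * d) / (b - a) = (b - a) * (c + d) / 2 := by
  rcases eq_or_ne a b with rfl | hab
  · simp
  have hba : b - a ≠ 0 := sub_ne_zero.mpr hab.symm
  have hderiv : ∀ x ∈ uIcc a b, HasDerivAt
      (fun x => (-(b - x) ^ 2 * c + (x - a) ^ 2 * d) / (2 * (b - a)))
      (((b - x) * c + (x - a) * d) / (b - a)) x := by
    intro x _
    refine ((((((hasDerivAt_id x).const_sub b).pow 2).neg.mul_const c).add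
      ((((hasDerivAt_id x).sub_const a).pow 2).mul_const d)).div_const
        (2 * (b - a))).congr_deriv ?_
    simp only [id]
    field_simp
    ring
  rw [integral_eq_sub_of_hasDerivAt hderiv ((by fun_prop : Continuous _).intervalIntegrable _ _)]
  field_simp
  ring

lemma godunovaLevin_weight_mul_le {V : Set ℝ} {G : ℝ → ℝ}
    (hGL : ∀ a ∈ V, ∀ b ∈ V, ∀ ζ ∈ Ioo (0:ℝ) 1,
      G (ζ * a + (1 - ζ) * b) ≤ (1 / ζ) * G a + (1 / (1 - ζ)) * G b)
    {m1 m2 x : ℝ} (hm1 : m1 ∈ V) (hm2 : m2 ∈ V) (hx : x ∈ Ioo m1 m2) :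
    (m2 - x) * (x - m1) / (m2 - m1) ^ 2 * G x
      ≤ ((m2 - x) * G m2 + (x - m1) * G m1) / (m2 - m1) := by
  obtain ⟨hx1, hx2⟩ := hx
  have hd : m2 - m1 ≠ 0 := by linarith
  set ζ := (x - m1) / (m2 - m1) with hζ
  have hζ_mem : ζ ∈ Ioo 0 1 :=
    ⟨div_pos (by linarith) (by linarith), (div_lt_one (by linarith)).mpr (by linarith)⟩
  have hx_eq : ζ * m2 + (1 - ζ) * m1 = x := by rw [hζ]; field_simp; ring
  have key := mul_one_sub_mul_le_of_le_div_add_div hζ_mem (hGL m2 hm2 m1 hm1 ζ hζ_mem)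
  rw [hx_eq] at key
  convert key using 1 <;> rw [hζ] <;> field_simp <;> ring

theorem godunova_levin_right_general (V : Set ℝ) (G : ℝ → ℝ)
    (hGL : ∀ a ∈ V, ∀ b ∈ V, ∀ ζ ∈ Set.Ioo (0:ℝ) 1,
      G (ζ * a + (1 - ζ) * b) ≤ (1 / ζ) * G a + (1 / (1 - ζ)) * G b)
    (m1 m2 : ℝ) (hm1 : m1 ∈ V) (hm2 : m2 ∈ V) (hlt : m1 < m2)
    (hint : IntervalIntegrable G volume m1 m2) :
    (1 / (m2 - m1)) * ∫ x in m1..m2, ((m2 - x) * (x - m1) / (m2 - m1) ^ 2) * G x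
      ≤ (G m1 + G m2) / 2 := by
  have hd : 0 < m2 - m1 := sub_pos.mpr hlt
  have hint_weighted : IntervalIntegrable
      (fun x => (m2 - x) * (x - m1) / (m2 - m1) ^ 2 * G x) volume m1 m2 :=
    hint.continuousOn_mul (by fun_prop)
  have hint_affine : IntervalIntegrable
      (fun x => ((m2 - x) * G m2 + (x - m1) * G m1) / (m2 - m1)) volume m1 m2 :=
    (by fun_prop : Continuous _).intervalIntegrable _ _
  calc (1 / (m2 - m1)) * ∫ x in m1..m2, (m2 - x) * (x - m1) / (m2 - m1) ^ 2 * G x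
      ≤ (1 / (m2 - m1)) * ∫ x in m1..m2, ((m2 - x) * G m2 + (x - m1) * G m1) / (m2 - m1) := by
        gcongr
        exact integral_mono_on_of_le_Ioo hlt.le hint_weighted hint_affine
          fun x hx => godunovaLevin_weight_mul_le hGL hm1 hm2 hx
    _ = (G m1 + G m2) / 2 := by
        rw [integral_sub_mul_add_sub_mul_div]
        field_simp
        ring

theorem godunova_levin_right (V : Set ℝ) (hV : Convex ℝ V) (G : ℝ → ℝ)
    (hnonneg : ∀ x ∈ V, 0 ≤ G x)
    (hGL : ∀ a ∈ V, ∀ b ∈ V, ∀ ζ ∈ Set.Ioo (0:ℝ) 1,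
      G (ζ * a + (1 - ζ) * b) ≤ (1 / ζ) * G a + (1 / (1 - ζ)) * G b)
    (m1 m2 : ℝ) (hm1 : m1 ∈ V) (hm2 : m2 ∈ V) (hlt : m1 < m2)
    (hint : IntervalIntegrable G volume m1 m2) :
    (1 / (m2 - m1)) * ∫ x in m1..m2, ((m2 - x) * (x - m1) / (m2 - m1) ^ 2) * G x
      ≤ (G m1 + G m2) / 2 :=
  godunova_levin_right_general V G hGL m1 m2 hm1 hm2 hlt hint
end

section
/- Let 0 < s < 1, and define G : [0,∞) → ℝ by G(0) = c1 and G(m) = c2·m^s + c3 for m > 0. If c2 ≥ 0 and 0 ≤ c3 ≤ c1, then G is s-convex in the second sense. -/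
/-!
Write `G x = c2 * x ^ s + c3 + (c1 - c3) * 𝟙[x = 0]` (using `0 ^ s = 0`). The class of
`s`-convex functions is closed under sums and nonnegative multiples, so it suffices to treat the
three pieces: `x ↦ x ^ s` by its subadditivity, and the nonnegative constants and the
indicator of `0` by `ζ₁ ^ s + ζ₂ ^ s ≥ ζ₁ + ζ₂ = 1`.
-/

open Real

/-- `s`-convexity in the second sense on `[0, ∞)`. -/
def IsSConvex (s : ℝ) (f : ℝ → ℝ) : Prop :=
  ∀ a b ζ₁ ζ₂ : ℝ, 0 ≤ a → 0 ≤ b → 0 ≤ ζ₁ → 0 ≤ ζ₂ → ζ₁ + ζ₂ = 1 →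
    f (ζ₁ * a + ζ₂ * b) ≤ ζ₁ ^ s * f a + ζ₂ ^ s * f b

lemma one_le_rpow_add_rpow_of_add_eq_one {s ζ₁ ζ₂ : ℝ} (hs : s ≤ 1) (h₁ : 0 ≤ ζ₁) (h₂ : 0 ≤ ζ₂)
    (hsum : ζ₁ + ζ₂ = 1) : 1 ≤ ζ₁ ^ s + ζ₂ ^ s := by
  have := self_le_rpow_of_le_one h₁ (by linarith) hs
  have := self_le_rpow_of_le_one h₂ (by linarith) hs
  linarith

namespace IsSConvex

variable {s : ℝ} {f g : ℝ → ℝ}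

lemma add (hf : IsSConvex s f) (hg : IsSConvex s g) : IsSConvex s fun x ↦ f x + g x :=
  fun a b ζ₁ ζ₂ ha hb h₁ h₂ hsum ↦ by
    have := hf a b ζ₁ ζ₂ ha hb h₁ h₂ hsum
    have := hg a b ζ₁ ζ₂ ha hb h₁ h₂ hsum
    linarith

lemma const_mul {c : ℝ} (hc : 0 ≤ c) (hf : IsSConvex s f) : IsSConvex s fun x ↦ c * f x :=
  fun a b ζ₁ ζ₂ ha hb h₁ h₂ hsum ↦ by
    have := mul_le_mul_of_nonneg_left (hf a b ζ₁ ζ₂ ha hb h₁ h₂ hsum) hc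
    linarith

end IsSConvex

lemma isSConvex_const {s c : ℝ} (hs : s ≤ 1) (hc : 0 ≤ c) : IsSConvex s fun _ ↦ c :=
  fun _ _ _ _ _ _ h₁ h₂ hsum ↦ by
    have := mul_le_mul_of_nonneg_right (one_le_rpow_add_rpow_of_add_eq_one hs h₁ h₂ hsum) hc
    linarith

lemma isSConvex_rpow {s : ℝ} (hs₀ : 0 ≤ s) (hs₁ : s ≤ 1) : IsSConvex s fun x ↦ x ^ s :=
  fun a b ζ₁ ζ₂ ha hb h₁ h₂ _ ↦
    calc (ζ₁ * a + ζ₂ * b) ^ s ≤ (ζ₁ * a) ^ s + (ζ₂ * b) ^ s :=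
          rpow_add_le_add_rpow (mul_nonneg h₁ ha) (mul_nonneg h₂ hb) hs₀ hs₁
      _ = ζ₁ ^ s * a ^ s + ζ₂ ^ s * b ^ s := by rw [mul_rpow h₁ ha, mul_rpow h₂ hb]

lemma isSConvex_indicator_zero {s : ℝ} (hs : s ≤ 1) :
    IsSConvex s fun x ↦ if x = 0 then 1 else 0 := by
  intro a b ζ₁ ζ₂ ha hb h₁ h₂ hsum
  dsimp only
  by_cases hp : ζ₁ * a + ζ₂ * b = 0
  swap
  · rw [if_neg hp]
    positivity
  rw [if_pos hp]
  obtain ⟨hζa, hζb⟩ : ζ₁ * a = 0 ∧ ζ₂ * b = 0 :=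
    (add_eq_zero_iff_of_nonneg (mul_nonneg h₁ ha) (mul_nonneg h₂ hb)).1 hp
  rcases mul_eq_zero.1 hζa with rfl | rfl
  · obtain rfl : ζ₂ = 1 := by linarith
    obtain rfl : b = 0 := by simpa using hζb
    simp only [one_rpow, if_true, one_mul, le_add_iff_nonneg_left]
    positivity
  rcases mul_eq_zero.1 hζb with rfl | rfl
  · obtain rfl : ζ₁ = 1 := by linarith
    simp only [one_rpow, if_true, one_mul, le_add_iff_nonneg_right]
    positivity
  simpa using one_le_rpow_add_rpow_of_add_eq_one hs h₁ h₂ hsum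

theorem s_convex_example (s c1 c2 c3 : ℝ) (hs0 : 0 < s) (hs1 : s < 1)
    (hc2 : 0 ≤ c2) (hc3 : 0 ≤ c3) (hc31 : c3 ≤ c1)
    (G : ℝ → ℝ) (hG : ∀ m : ℝ, G m = if m = 0 then c1 else c2 * m ^ s + c3) :
    ∀ a b ζ1 ζ2 : ℝ, 0 ≤ a → 0 ≤ b → 0 ≤ ζ1 → 0 ≤ ζ2 → ζ1 + ζ2 = 1 →
      G (ζ1 * a + ζ2 * b) ≤ ζ1 ^ s * G a + ζ2 ^ s * G b := by
  have hG_eq : G = fun x ↦ c2 * x ^ s + c3 + (c1 - c3) * if x = 0 then 1 else 0 := by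
    funext x
    rw [hG]
    split_ifs with hx
    · rw [hx, zero_rpow hs0.ne']
      ring
    · ring
  rw [hG_eq]
  exact (((isSConvex_rpow hs0.le hs1.le).const_mul hc2).add (isSConvex_const hs1.le hc3)).add
    ((isSConvex_indicator_zero hs1.le).const_mul (sub_nonneg.2 hc31))
end

section
/- Let G : V ⊆ ℝ → ℝ be differentiable on the interior of V with m1, m2 in the interior, m1 < m2, and G' integrable. If |G'| is convex on [m1, m2], then |(G(m1)+G(m2))/2 - (1/(m2-m1)) ∫_{m1}^{m2} G(x) dx| ≤ ((m2-m1)/8)·(|G'(m1)| + |G'(m2)|). -/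
/-!
Integrating by parts against `x - (a + b) / 2` turns the trapezoid error into
`(1 / (b - a)) * ∫ (x - (a + b) / 2) * G' x`. Convexity bounds `|G'|` by its chord between the
endpoints. Around the midpoint the chord is a constant plus an odd linear part; against
`|x - (a + b) / 2|` the odd part integrates to zero, so the bound is
`(b - a) ^ 2 / 8 * (|G' a| + |G' b|)`.
-/

open MeasureTheory intervalIntegral Set

theorem ConvexOn.sub_mul_le_of_mem_Icc {f : ℝ → ℝ} {a b x : ℝ} (hf : ConvexOn ℝ (Icc a b) f)
    (hx : x ∈ Icc a b) : (b - a) * f x ≤ (b - x) * f a + (x - a) * f b := by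
  rcases hx.1.eq_or_lt with rfl | hax
  · simp
  rcases hx.2.eq_or_lt with rfl | hxb
  · simp
  exact hf.secant_mono_aux1 (left_mem_Icc.2 (hax.trans hxb).le)
    (right_mem_Icc.2 (hax.trans hxb).le) hax hxb

theorem integral_mul_add_mul (h α β : ℝ) :
    ∫ t in 0..h, t * (α + β * t) = α * h ^ 2 / 2 + β * h ^ 3 / 3 := by
  have hF : ∀ t : ℝ, HasDerivAt (fun t => α * t ^ 2 / 2 + β * t ^ 3 / 3) (t * (α + β * t)) t := by
    intro t
    refine ((((hasDerivAt_pow 2 t).const_mul α).div_const 2).add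
      (((hasDerivAt_pow 3 t).const_mul β).div_const 3)).congr_deriv ?_
    push_cast
    ring
  rw [integral_eq_sub_of_hasDerivAt (fun t _ => hF t)
    ((by fun_prop : Continuous fun t : ℝ => t * (α + β * t)).intervalIntegrable _ _)]
  ring

theorem integral_abs_mul_add_mul {h : ℝ} (hh : 0 ≤ h) (α β : ℝ) :
    ∫ t in -h..h, |t| * (α + β * t) = α * h ^ 2 := by
  have hint : ∀ u v : ℝ, IntervalIntegrable (fun t => |t| * (α + β * t)) volume u v :=
    fun u v => (by fun_prop : Continuous _).intervalIntegrable u v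
  rw [← integral_add_adjacent_intervals (hint _ 0) (hint 0 _)]
  have hneg : ∫ t in -h..0, |t| * (α + β * t) = ∫ t in 0..h, t * (α + -β * t) := by
    rw [← neg_neg h, ← neg_zero, ← integral_comp_neg, neg_neg, neg_zero]
    refine integral_congr fun t ht => ?_
    rw [uIcc_of_le hh] at ht
    simp [abs_of_nonneg ht.1]
  have hpos : ∫ t in 0..h, |t| * (α + β * t) = ∫ t in 0..h, t * (α + β * t) := by
    refine integral_congr fun t ht => ?_
    rw [uIcc_of_le hh] at ht
    simp [abs_of_nonneg ht.1]
  rw [hneg, hpos, integral_mul_add_mul, integral_mul_add_mul]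
  ring

theorem integral_abs_sub_midpoint_mul {a b : ℝ} (hab : a ≤ b) (p q : ℝ) :
    ∫ x in a..b, |x - (a + b) / 2| * ((b - x) * p + (x - a) * q) = (b - a) ^ 3 / 8 * (p + q) := by
  have hshift : ∀ x : ℝ, (b - x) * p + (x - a) * q
      = (b - a) / 2 * (p + q) + (q - p) * (x - (a + b) / 2) := fun x => by ring
  simp_rw [hshift]
  rw [integral_comp_sub_right (fun t => |t| * ((b - a) / 2 * (p + q) + (q - p) * t))]
  rw [show a - (a + b) / 2 = -((b - a) / 2) by ring, show b - (a + b) / 2 = (b - a) / 2 by ring,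
    integral_abs_mul_add_mul (by linarith)]
  ring

theorem trapezoid_sub_average_eq_integral_mul_deriv {G G' : ℝ → ℝ} {a b : ℝ} (hab : a ≠ b)
    (hG : ∀ x ∈ uIcc a b, HasDerivAt G (G' x) x) (hG' : IntervalIntegrable G' volume a b) :
    (G a + G b) / 2 - (1 / (b - a)) * ∫ x in a..b, G x =
      (1 / (b - a)) * ∫ x in a..b, (x - (a + b) / 2) * G' x := by
  have hparts := integral_mul_deriv_eq_deriv_mul
    (fun x _ => (hasDerivAt_id x).sub_const ((a + b) / 2)) hG intervalIntegrable_const hG'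
  simp only [id, one_mul] at hparts
  rw [hparts]
  have : b - a ≠ 0 := sub_ne_zero.2 hab.symm
  field_simp
  ring

theorem abs_integral_sub_midpoint_mul_le {f : ℝ → ℝ} {a b : ℝ} (hab : a < b)
    (hf : IntervalIntegrable f volume a b) (hconv : ConvexOn ℝ (Icc a b) fun x => |f x|) :
    |∫ x in a..b, (x - (a + b) / 2) * f x| ≤ (b - a) ^ 2 / 8 * (|f a| + |f b|) := by
  set c := (a + b) / 2
  have hba : 0 < b - a := sub_pos.2 hab
  have hpoint : ∀ x ∈ Icc a b, |(x - c) * f x|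
      ≤ |x - c| * ((b - x) * |f a| + (x - a) * |f b|) / (b - a) := fun x hx => by
    rw [abs_mul, le_div_iff₀ hba, mul_assoc, mul_comm |f x|]
    exact mul_le_mul_of_nonneg_left (hconv.sub_mul_le_of_mem_Icc hx) (abs_nonneg _)
  calc |∫ x in a..b, (x - c) * f x|
      ≤ ∫ x in a..b, |(x - c) * f x| := abs_integral_le_integral_abs hab.le
    _ ≤ ∫ x in a..b, |x - c| * ((b - x) * |f a| + (x - a) * |f b|) / (b - a) :=
        integral_mono_on hab.le (hf.continuousOn_mul (by fun_prop)).abs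
          ((by fun_prop : Continuous _).intervalIntegrable _ _) hpoint
    _ = (b - a) ^ 2 / 8 * (|f a| + |f b|) := by
        rw [intervalIntegral.integral_div, integral_abs_sub_midpoint_mul hab.le]
        field_simp

theorem trapezoid_abs_deriv_convex_general (m1 m2 : ℝ) (G : ℝ → ℝ) (hlt : m1 < m2)
    (V : Set ℝ) (hVI : Set.Icc m1 m2 ⊆ V)
    (hdiff : ∀ x ∈ V, DifferentiableAt ℝ G x)
    (hG' : IntervalIntegrable (deriv G) volume m1 m2)
    (hconv : ConvexOn ℝ (Set.Icc m1 m2) (fun x => |deriv G x|)) :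
    |(G m1 + G m2) / 2 - (1 / (m2 - m1)) * ∫ x in m1..m2, G x| ≤
      ((m2 - m1) / 8) * (|deriv G m1| + |deriv G m2|) := by
  have hG : ∀ x ∈ uIcc m1 m2, HasDerivAt G (deriv G x) x := fun x hx =>
    (hdiff x (hVI (uIcc_of_le hlt.le ▸ hx))).hasDerivAt
  have hpos : 0 < m2 - m1 := sub_pos.2 hlt
  rw [trapezoid_sub_average_eq_integral_mul_deriv hlt.ne hG hG', abs_mul,
    abs_of_pos (one_div_pos.2 hpos)]
  calc 1 / (m2 - m1) * |∫ x in m1..m2, (x - (m1 + m2) / 2) * deriv G x|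
      ≤ 1 / (m2 - m1) * ((m2 - m1) ^ 2 / 8 * (|deriv G m1| + |deriv G m2|)) := by
        gcongr
        exact abs_integral_sub_midpoint_mul_le hlt hG' hconv
    _ = (m2 - m1) / 8 * (|deriv G m1| + |deriv G m2|) := by
        field_simp

theorem trapezoid_abs_deriv_convex (m1 m2 : ℝ) (G : ℝ → ℝ) (hlt : m1 < m2)
    (V : Set ℝ) (hV : IsOpen V) (hVI : Set.Icc m1 m2 ⊆ V)
    (hdiff : ∀ x ∈ V, DifferentiableAt ℝ G x)
    (hG' : IntervalIntegrable (deriv G) volume m1 m2)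
    (hconv : ConvexOn ℝ (Set.Icc m1 m2) (fun x => |deriv G x|)) :
    |(G m1 + G m2) / 2 - (1 / (m2 - m1)) * ∫ x in m1..m2, G x| ≤
      ((m2 - m1) / 8) * (|deriv G m1| + |deriv G m2|) :=
  trapezoid_abs_deriv_convex_general m1 m2 G hlt V hVI hdiff hG' hconv
end

section
/- Let G : V ⊆ ℝ → ℝ be differentiable with |G'|^q convex on [m1, m2] for some q > 1 with 1/p + 1/q = 1. Then |(G(m1)+G(m2))/2 - (1/(m2-m1)) ∫_{m1}^{m2} G(x) dx| ≤ ((m2-m1)/2)·(1/(p+1))^{1/p}·[(|G'(m1)|^q + |G'(m2)|^q)/2]^{1/q}. -/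
/-!
Integration by parts against the kernel `x - (a + b) / 2` turns the trapezoid error
`(b - a) * ((G a + G b) / 2) - ∫ G` into `∫ (x - (a + b) / 2) * G' x`. Hölder's inequality
bounds this by the `L^p` norm of the kernel, which is explicit, times the `L^q` norm of `G'`,
and the right half of the Hermite–Hadamard inequality for the convex function `|G'|^q` gives
`∫ |G'|^q ≤ (b - a) * (|G' a|^q + |G' b|^q) / 2`.
-/

open MeasureTheory intervalIntegral Set

namespace ConvexOn

variable {f : ℝ → ℝ} {a b : ℝ}

theorem le_chord (hf : ConvexOn ℝ (Icc a b) f) {x : ℝ} (hx : x ∈ Icc a b) (hab : a < b) :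
    f x ≤ (b - x) / (b - a) * f a + (x - a) / (b - a) * f b := by
  have hba : 0 < b - a := sub_pos.2 hab
  have hcomb : (b - x) / (b - a) * a + (x - a) / (b - a) * b = x := by
    field_simp; ring
  simpa only [smul_eq_mul, hcomb] using
    hf.2 (left_mem_Icc.2 hab.le) (right_mem_Icc.2 hab.le)
      (div_nonneg (sub_nonneg.2 hx.2) hba.le) (div_nonneg (sub_nonneg.2 hx.1) hba.le)
      (by field_simp; ring)

theorem le_max_endpoints (hf : ConvexOn ℝ (Icc a b) f) {x : ℝ} (hx : x ∈ Icc a b) :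
    f x ≤ max (f a) (f b) :=
  hf.le_on_segment (left_mem_Icc.2 (hx.1.trans hx.2)) (right_mem_Icc.2 (hx.1.trans hx.2))
    (segment_eq_Icc (hx.1.trans hx.2) ▸ hx)

-- Convexity along the segment from `x` to its mirror image `a + b - x` through the midpoint.
theorem two_mul_midpoint_sub_max_le (hf : ConvexOn ℝ (Icc a b) f) {x : ℝ} (hx : x ∈ Icc a b) :
    2 * f ((a + b) / 2) - max (f a) (f b) ≤ f x := by
  have hx' : a + b - x ∈ Icc a b := ⟨by linarith [hx.2], by linarith [hx.1]⟩
  have hmid := hf.2 hx hx' (by norm_num : (0 : ℝ) ≤ 1 / 2) (by norm_num : (0 : ℝ) ≤ 1 / 2)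
    (by norm_num)
  have hcomb : (1 / 2 : ℝ) • x + (1 / 2 : ℝ) • (a + b - x) = (a + b) / 2 := by
    simp only [smul_eq_mul]; ring
  rw [hcomb, smul_eq_mul, smul_eq_mul] at hmid
  linarith [hf.le_max_endpoints hx']

theorem intervalIntegrable (hf : ConvexOn ℝ (Icc a b) f) (hab : a ≤ b) :
    IntervalIntegrable f volume a b := by
  rw [intervalIntegrable_iff_integrableOn_Ioc_of_le hab]
  have hmeas : AEStronglyMeasurable f (volume.restrict (Ioc a b)) := by
    rw [← Measure.restrict_congr_set Ioo_ae_eq_Ioc]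
    refine ContinuousOn.aestronglyMeasurable ?_ measurableSet_Ioo
    simpa only [interior_Icc] using hf.continuousOn_interior
  refine IntegrableOn.of_bound measure_Ioc_lt_top hmeas (max (max (f a) (f b))
    |2 * f ((a + b) / 2) - max (f a) (f b)|) ?_
  filter_upwards [ae_restrict_mem measurableSet_Ioc] with x hx
  have hx' := Ioc_subset_Icc_self hx
  rw [Real.norm_eq_abs, abs_le]
  constructor
  · linarith [hf.two_mul_midpoint_sub_max_le hx',
      neg_abs_le (2 * f ((a + b) / 2) - max (f a) (f b)),
      le_max_right (max (f a) (f b)) |2 * f ((a + b) / 2) - max (f a) (f b)|]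
  · exact (hf.le_max_endpoints hx').trans (le_max_left _ _)

theorem intervalIntegral_le_trapezoid (hf : ConvexOn ℝ (Icc a b) f) (hab : a ≤ b) :
    ∫ x in a..b, f x ≤ (b - a) * ((f a + f b) / 2) := by
  rcases hab.eq_or_lt with rfl | hab
  · simp
  have hba : b - a ≠ 0 := (sub_pos.2 hab).ne'
  have hchord : ∫ x in a..b, ((b - x) / (b - a) * f a + (x - a) / (b - a) * f b) =
      (b - a) * ((f a + f b) / 2) := by
    rw [intervalIntegral.integral_add (Continuous.intervalIntegrable (by fun_prop) a b)
      (Continuous.intervalIntegrable (by fun_prop) a b)]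
    simp only [intervalIntegral.integral_mul_const, intervalIntegral.integral_div,
      integral_comp_sub_left (fun x => x), integral_comp_sub_right (fun x => x), integral_id]
    field_simp
    ring
  calc ∫ x in a..b, f x
      ≤ ∫ x in a..b, ((b - x) / (b - a) * f a + (x - a) / (b - a) * f b) :=
        integral_mono_on hab.le (hf.intervalIntegrable hab.le)
          (Continuous.intervalIntegrable (by fun_prop) a b) fun x hx => hf.le_chord hx hab
    _ = (b - a) * ((f a + f b) / 2) := hchord

end ConvexOn

theorem integral_sub_midpoint_mul_deriv {f f' : ℝ → ℝ} {a b : ℝ}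
    (hf : ∀ x ∈ uIcc a b, HasDerivAt f (f' x) x) (hf' : IntervalIntegrable f' volume a b) :
    ∫ x in a..b, (x - (a + b) / 2) * f' x = (b - a) * ((f a + f b) / 2) - ∫ x in a..b, f x := by
  rw [integral_mul_deriv_eq_deriv_mul (fun x _ => (hasDerivAt_id' x).sub_const ((a + b) / 2)) hf
    intervalIntegrable_const hf']
  simp only [one_mul]
  ring

theorem integral_abs_rpow_symm {c p : ℝ} (hc : 0 ≤ c) (hp : 0 ≤ p) :
    ∫ x in -c..c, |x| ^ p = 2 * (c ^ (p + 1) / (p + 1)) := by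
  have hint : ∀ u v : ℝ, IntervalIntegrable (fun x : ℝ => |x| ^ p) volume u v := fun u v =>
    (continuous_abs.rpow_const fun _ => Or.inr hp).intervalIntegrable u v
  have hright : ∫ x in (0 : ℝ)..c, |x| ^ p = c ^ (p + 1) / (p + 1) := by
    rw [integral_congr (g := fun x => x ^ p) fun x hx => by
      rw [abs_of_nonneg (uIcc_of_le hc ▸ hx).1]]
    rw [integral_rpow (Or.inl (by linarith)), Real.zero_rpow (by linarith), sub_zero]
  have hleft : ∫ x in -c..0, |x| ^ p = c ^ (p + 1) / (p + 1) := by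
    rw [← hright, ← neg_zero, ← intervalIntegral.integral_comp_neg]
    simp only [abs_neg, neg_zero]
  rw [← integral_add_adjacent_intervals (hint _ 0) (hint 0 _), hleft, hright]
  ring

theorem integral_abs_sub_midpoint_rpow {a b p : ℝ} (hab : a ≤ b) (hp : 0 ≤ p) :
    ∫ x in a..b, |x - (a + b) / 2| ^ p = (b - a) * ((b - a) / 2) ^ p / (p + 1) := by
  have hc : 0 ≤ (b - a) / 2 := by linarith
  rw [intervalIntegral.integral_comp_sub_right (fun x => |x| ^ p),
    show a - (a + b) / 2 = -((b - a) / 2) by ring, show b - (a + b) / 2 = (b - a) / 2 by ring,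
    integral_abs_rpow_symm hc hp, Real.rpow_add_one' hc (by linarith)]
  ring

theorem memLp_restrict_Ioc_of_intervalIntegrable_abs_rpow {f : ℝ → ℝ} {a b p : ℝ}
    (hab : a ≤ b) (hp : 0 < p) (hf : AEStronglyMeasurable f volume)
    (hfp : IntervalIntegrable (fun x => |f x| ^ p) volume a b) :
    MemLp f (ENNReal.ofReal p) (volume.restrict (Ioc a b)) := by
  rw [← integrable_norm_rpow_iff hf.restrict (by simpa using hp) ENNReal.ofReal_ne_top,
    ENNReal.toReal_ofReal hp.le]
  simpa only [Real.norm_eq_abs, IntegrableOn] using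
    (intervalIntegrable_iff_integrableOn_Ioc_of_le hab).1 hfp

theorem abs_intervalIntegral_mul_le_Lp_mul_Lq {f g : ℝ → ℝ} {a b p q : ℝ} (hab : a ≤ b)
    (hpq : p.HolderConjugate q) (hf : AEStronglyMeasurable f volume)
    (hg : AEStronglyMeasurable g volume)
    (hfp : IntervalIntegrable (fun x => |f x| ^ p) volume a b)
    (hgq : IntervalIntegrable (fun x => |g x| ^ q) volume a b) :
    |∫ x in a..b, f x * g x| ≤
      (∫ x in a..b, |f x| ^ p) ^ (1 / p) * (∫ x in a..b, |g x| ^ q) ^ (1 / q) := by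
  have holder := integral_mul_norm_le_Lp_mul_Lq hpq
    (memLp_restrict_Ioc_of_intervalIntegrable_abs_rpow hab hpq.pos hf hfp)
    (memLp_restrict_Ioc_of_intervalIntegrable_abs_rpow hab hpq.symm.pos hg hgq)
  simp only [Real.norm_eq_abs, ← abs_mul, ← integral_of_le hab] at holder
  exact (abs_integral_le_integral_abs hab).trans holder

theorem abs_mul_average_endpoints_sub_integral_le {f f' : ℝ → ℝ} {a b p q : ℝ}
    (hab : a ≤ b) (hpq : p.HolderConjugate q) (hf : ∀ x ∈ uIcc a b, HasDerivAt f (f' x) x)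
    (hf' : IntervalIntegrable f' volume a b) (hf'_meas : AEStronglyMeasurable f' volume)
    (hf'_q : IntervalIntegrable (fun x => |f' x| ^ q) volume a b) :
    |(b - a) * ((f a + f b) / 2) - ∫ x in a..b, f x| ≤
      (b - a) ^ (1 / p) * ((b - a) / 2) * (1 / (p + 1)) ^ (1 / p) *
        (∫ x in a..b, |f' x| ^ q) ^ (1 / q) := by
  have hp := hpq.pos
  have hkernel : IntervalIntegrable (fun x => |x - (a + b) / 2| ^ p) volume a b :=
    ((continuous_sub_right _).abs.rpow_const fun _ => Or.inr hp.le).intervalIntegrable _ _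
  have hkernel_norm : ((b - a) * ((b - a) / 2) ^ p / (p + 1)) ^ (1 / p) =
      (b - a) ^ (1 / p) * ((b - a) / 2) * (1 / (p + 1)) ^ (1 / p) := by
    have hc : 0 ≤ (b - a) / 2 := by linarith
    rw [show (b - a) * ((b - a) / 2) ^ p / (p + 1) = ((b - a) / 2) ^ p * ((b - a) * (1 / (p + 1)))
        by ring, Real.mul_rpow (by positivity) (by positivity),
      Real.mul_rpow (by linarith) (by positivity), one_div p, Real.rpow_rpow_inv hc hp.ne']
    ring
  have holder :=
    abs_intervalIntegral_mul_le_Lp_mul_Lq hab hpq (by fun_prop) hf'_meas hkernel hf'_q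
  rwa [integral_sub_midpoint_mul_deriv hf hf', integral_abs_sub_midpoint_rpow hab hp.le,
    hkernel_norm] at holder

theorem trapezoid_holder_general (m1 m2 : ℝ) (G : ℝ → ℝ) (hlt : m1 < m2)
    (V : Set ℝ) (hVI : Set.Icc m1 m2 ⊆ V)
    (hdiff : ∀ x ∈ V, DifferentiableAt ℝ G x)
    (hG' : IntervalIntegrable (deriv G) volume m1 m2)
    (p q : ℝ) (hp : 1 < p) (hpq : 1 / p + 1 / q = 1)
    (hconv : ConvexOn ℝ (Set.Icc m1 m2) (fun x => |deriv G x| ^ q)) :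
    |(G m1 + G m2) / 2 - (1 / (m2 - m1)) * ∫ x in m1..m2, G x| ≤
      ((m2 - m1) / 2) * (1 / (p + 1)) ^ (1 / p) *
        ((|deriv G m1| ^ q + |deriv G m2| ^ q) / 2) ^ (1 / q) := by
  set d := m2 - m1
  set S := (|deriv G m1| ^ q + |deriv G m2| ^ q) / 2
  have hd : 0 < d := sub_pos.2 hlt
  have hpq' : p.HolderConjugate q :=
    Real.holderConjugate_iff.2 ⟨hp, by simpa only [one_div] using hpq⟩
  have hderiv : ∀ x ∈ uIcc m1 m2, HasDerivAt G (deriv G x) x := fun x hx =>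
    (hdiff x (hVI (uIcc_of_le hlt.le ▸ hx))).hasDerivAt
  have hholder := abs_mul_average_endpoints_sub_integral_le hlt.le hpq' hderiv hG'
    (measurable_deriv G).aestronglyMeasurable (hconv.intervalIntegrable hlt.le)
  have hhadamard : (∫ x in m1..m2, |deriv G x| ^ q) ^ (1 / q) ≤ d ^ (1 / q) * S ^ (1 / q) := by
    rw [← Real.mul_rpow hd.le (by positivity)]
    exact Real.rpow_le_rpow (integral_nonneg hlt.le fun x _ => by positivity)
      (hconv.intervalIntegral_le_trapezoid hlt.le) (one_div_pos.2 hpq'.symm.pos).le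
  have hdd : d ^ (1 / p) * d ^ (1 / q) = d := by rw [← Real.rpow_add hd, hpq, Real.rpow_one]
  calc |(G m1 + G m2) / 2 - 1 / d * ∫ x in m1..m2, G x|
      = 1 / d * |d * ((G m1 + G m2) / 2) - ∫ x in m1..m2, G x| := by
        rw [← abs_of_pos (one_div_pos.2 hd), ← abs_mul, abs_of_pos (one_div_pos.2 hd)]
        congr 1
        field_simp
    _ ≤ 1 / d * (d ^ (1 / p) * (d / 2) * (1 / (p + 1)) ^ (1 / p) *
          (d ^ (1 / q) * S ^ (1 / q))) := by
        gcongr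
        exact hholder.trans (by gcongr)
    _ = d ^ (1 / p) * d ^ (1 / q) / d * (d / 2 * (1 / (p + 1)) ^ (1 / p) * S ^ (1 / q)) := by ring
    _ = d / 2 * (1 / (p + 1)) ^ (1 / p) * S ^ (1 / q) := by rw [hdd, div_self hd.ne', one_mul]

theorem trapezoid_holder (m1 m2 : ℝ) (G : ℝ → ℝ) (hlt : m1 < m2)
    (V : Set ℝ) (hV : IsOpen V) (hVI : Set.Icc m1 m2 ⊆ V)
    (hdiff : ∀ x ∈ V, DifferentiableAt ℝ G x)
    (hG' : IntervalIntegrable (deriv G) volume m1 m2)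
    (p q : ℝ) (hp : 1 < p) (hq : 1 < q) (hpq : 1 / p + 1 / q = 1)
    (hconv : ConvexOn ℝ (Set.Icc m1 m2) (fun x => |deriv G x| ^ q)) :
    |(G m1 + G m2) / 2 - (1 / (m2 - m1)) * ∫ x in m1..m2, G x| ≤
      ((m2 - m1) / 2) * (1 / (p + 1)) ^ (1 / p) *
        ((|deriv G m1| ^ q + |deriv G m2| ^ q) / 2) ^ (1 / q) :=
  trapezoid_holder_general m1 m2 G hlt V hVI hdiff hG' p q hp hpq hconv
end

section
/- Let G : V ⊆ ℝ → ℝ be differentiable with |G'|^q convex on [m1, m2] for some q ≥ 1. Then |(G(m1)+G(m2))/2 - (1/(m2-m1)) ∫_{m1}^{m2} G(x) dx| ≤ ((m2-m1)/4)·[(|G'(m1)|^q + |G'(m2)|^q)/2]^{1/q}. -/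
/-!
Integrating by parts, the trapezoid error is `(1 / (b - a)) ∫ (x - c) G'(x) dx` with `c` the
midpoint, so it is bounded by `(1 / (b - a)) ∫ |x - c| |G'(x)| dx`. The weight `|x - c|` is
invariant under the reflection `x ↦ a + b - x`, so only `|G'(x)| + |G'(a + b - x)|` matters.
Convexity of `|G'|^q` bounds `|G'(x)|^q + |G'(a + b - x)|^q` by `|G'(a)|^q + |G'(b)|^q`, and the
power mean inequality turns this into
`|G'(x)| + |G'(a + b - x)| ≤ 2 ((|G'(a)|^q + |G'(b)|^q) / 2)^(1/q)`.
Finally `∫ |x - c| dx = (b - a)^2 / 4`.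
-/

open MeasureTheory intervalIntegral Set

lemma add_le_two_mul_rpow_mean {q u v : ℝ} (hq : 1 ≤ q) (hu : 0 ≤ u) (hv : 0 ≤ v) :
    u + v ≤ 2 * ((u ^ q + v ^ q) / 2) ^ (1 / q) := by
  have hq0 : q ≠ 0 := by positivity
  have hjensen : ((u + v) / 2) ^ q ≤ (u ^ q + v ^ q) / 2 := by
    have := (convexOn_rpow hq).2 (mem_Ici.2 hu) (mem_Ici.2 hv) (by norm_num : (0 : ℝ) ≤ 1 / 2)
      (by norm_num : (0 : ℝ) ≤ 1 / 2) (by norm_num)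
    simp only [smul_eq_mul] at this
    rwa [← mul_add, ← mul_add, one_div_mul_eq_div, one_div_mul_eq_div] at this
  calc u + v = 2 * (((u + v) / 2) ^ q) ^ (1 / q) := by
        rw [one_div, Real.rpow_rpow_inv (by positivity) hq0]; ring
    _ ≤ 2 * ((u ^ q + v ^ q) / 2) ^ (1 / q) := by gcongr

lemma ConvexOn.map_add_map_add_sub_le {s : Set ℝ} {h : ℝ → ℝ} {a b x : ℝ}
    (hh : ConvexOn ℝ s h) (ha : a ∈ s) (hb : b ∈ s) (hx : x ∈ Icc a b) :
    h x + h (a + b - x) ≤ h a + h b := by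
  rw [← segment_eq_Icc (hx.1.trans hx.2)] at hx
  obtain ⟨θ, τ, hθ, hτ, hθτ, rfl⟩ := hx
  have hrefl : a + b - (θ • a + τ • b) = τ • a + θ • b := by
    simp only [smul_eq_mul]; linear_combination -(a + b) * hθτ
  rw [hrefl]
  have h₁ := hh.2 ha hb hθ hτ hθτ
  have h₂ := hh.2 ha hb hτ hθ (by rw [add_comm, hθτ])
  simp only [smul_eq_mul] at h₁ h₂ ⊢
  linear_combination h₁ + h₂ + (h a + h b) * hθτ

lemma integral_sub_midpoint_mul_deriv_eq {f f' : ℝ → ℝ} {a b : ℝ}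
    (hf : ContinuousOn f (uIcc a b))
    (hff' : ∀ x ∈ Ioo (min a b) (max a b), HasDerivAt f (f' x) x)
    (hf' : IntervalIntegrable f' volume a b) :
    ∫ x in a..b, (x - (a + b) / 2) * f' x = (b - a) * ((f a + f b) / 2) - ∫ x in a..b, f x := by
  rw [integral_mul_deriv_eq_deriv_mul_of_hasDerivAt (u := fun x ↦ x - (a + b) / 2)
    (u' := fun _ ↦ 1) (by fun_prop) hf (fun x _ ↦ (hasDerivAt_id' x).sub_const _) hff' intervalIntegrable_const hf']
  simp only [one_mul]
  ring

lemma integral_abs_sub_midpoint {a b : ℝ} (hab : a ≤ b) :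
    ∫ x in a..b, |x - (a + b) / 2| = (b - a) ^ 2 / 4 := by
  set h := (b - a) / 2
  have hh : 0 ≤ h := by positivity
  have hhalf : ∫ x in (0 : ℝ)..h, |x| = h ^ 2 / 2 := by
    have habs : EqOn (fun x : ℝ ↦ |x|) (fun x ↦ x) (uIcc 0 h) := fun x hx ↦
      abs_of_nonneg (by rw [uIcc_of_le hh] at hx; exact hx.1)
    simp [integral_congr habs, integral_id]
  have hint : ∀ u v : ℝ, IntervalIntegrable (fun x : ℝ ↦ |x|) volume u v :=
    fun u v ↦ continuous_abs.intervalIntegrable u v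
  calc ∫ x in a..b, |x - (a + b) / 2| = ∫ x in -h..h, |x| := by
        rw [integral_comp_sub_right (fun x ↦ |x|)]; congr 1 <;> ring
    _ = (∫ x in -h..0, |x|) + ∫ x in (0 : ℝ)..h, |x| :=
        (integral_add_adjacent_intervals (hint _ _) (hint _ _)).symm
    _ = (b - a) ^ 2 / 4 := by
        rw [← neg_zero, ← integral_comp_neg]; simp only [abs_neg, neg_zero]
        rw [hhalf]; ring

lemma integral_mul_le_of_add_reflect_le {w f : ℝ → ℝ} {a b M : ℝ} (hab : a ≤ b)
    (hwf : IntervalIntegrable (fun x ↦ w x * f x) volume a b)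
    (hw : IntervalIntegrable w volume a b)
    (hw_symm : ∀ x, w (a + b - x) = w x) (hw0 : ∀ x ∈ Icc a b, 0 ≤ w x)
    (hf : ∀ x ∈ Icc a b, f x + f (a + b - x) ≤ 2 * M) :
    ∫ x in a..b, w x * f x ≤ M * ∫ x in a..b, w x := by
  have hreflect : (fun x ↦ w x * f (a + b - x)) = fun x ↦ w (a + b - x) * f (a + b - x) := by
    simp only [hw_symm]
  have hwf' : IntervalIntegrable (fun x ↦ w x * f (a + b - x)) volume a b := by
    rw [hreflect]; simpa using (hwf.comp_sub_left (a + b)).symm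
  have heq : ∫ x in a..b, w x * f (a + b - x) = ∫ x in a..b, w x * f x := by
    rw [hreflect, integral_comp_sub_left (fun x ↦ w x * f x)]; simp
  have hle : ∫ x in a..b, w x * (f x + f (a + b - x)) ≤ ∫ x in a..b, w x * (2 * M) :=
    integral_mono_on hab (by simpa only [mul_add] using hwf.add hwf') (hw.mul_const _)
      fun x hx ↦ mul_le_mul_of_nonneg_left (hf x hx) (hw0 x hx)
  simp only [mul_add, integral_add hwf hwf', heq, intervalIntegral.integral_mul_const] at hle
  linarith

theorem trapezoid_pearce_pecaric_general (m1 m2 : ℝ) (G : ℝ → ℝ) (hlt : m1 < m2)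
    (V : Set ℝ) (hVI : Set.Icc m1 m2 ⊆ V)
    (hdiff : ∀ x ∈ V, DifferentiableAt ℝ G x)
    (hG' : IntervalIntegrable (deriv G) volume m1 m2)
    (q : ℝ) (hq : 1 ≤ q)
    (hconv : ConvexOn ℝ (Set.Icc m1 m2) (fun x => |deriv G x| ^ q)) :
    |(G m1 + G m2) / 2 - (1 / (m2 - m1)) * ∫ x in m1..m2, G x| ≤
      ((m2 - m1) / 4) * ((|deriv G m1| ^ q + |deriv G m2| ^ q) / 2) ^ (1 / q) := by
  obtain ⟨r, hr⟩ : ∃ r, r = ((|deriv G m1| ^ q + |deriv G m2| ^ q) / 2) ^ (1 / q) := ⟨_, rfl⟩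
  have hGcont : ContinuousOn G (uIcc m1 m2) := by
    rw [uIcc_of_le hlt.le]
    exact fun x hx ↦ (hdiff x (hVI hx)).continuousAt.continuousWithinAt
  have hderiv : ∀ x ∈ Ioo (min m1 m2) (max m1 m2), HasDerivAt G (deriv G x) x := by
    rw [min_eq_left hlt.le, max_eq_right hlt.le]
    exact fun x hx ↦ (hdiff x (hVI (Ioo_subset_Icc_self hx))).hasDerivAt
  have hreflect : ∀ x ∈ Icc m1 m2, |deriv G x| + |deriv G (m1 + m2 - x)| ≤ 2 * r := by
    intro x hx
    refine (add_le_two_mul_rpow_mean hq (abs_nonneg _) (abs_nonneg _)).trans ?_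
    rw [hr]
    gcongr 2 * (?_ / 2) ^ _
    exact hconv.map_add_map_add_sub_le (left_mem_Icc.2 hlt.le) (right_mem_Icc.2 hlt.le) hx
  have hweight : Continuous fun x ↦ |x - (m1 + m2) / 2| := by fun_prop
  have hbound : ∫ x in m1..m2, |x - (m1 + m2) / 2| * |deriv G x| ≤ r * ((m2 - m1) ^ 2 / 4) := by
    rw [← integral_abs_sub_midpoint hlt.le]
    refine integral_mul_le_of_add_reflect_le hlt.le
      (hG'.abs.continuousOn_mul hweight.continuousOn) (hweight.intervalIntegrable _ _)
      (fun x ↦ ?_) (fun x _ ↦ abs_nonneg _) hreflect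
    rw [← abs_neg]; ring_nf
  rw [← hr]
  calc |(G m1 + G m2) / 2 - (1 / (m2 - m1)) * ∫ x in m1..m2, G x|
      = |(∫ x in m1..m2, (x - (m1 + m2) / 2) * deriv G x) / (m2 - m1)| := by
        rw [integral_sub_midpoint_mul_deriv_eq hGcont hderiv hG']
        have hne : m2 - m1 ≠ 0 := (sub_pos.2 hlt).ne'
        congr 1; field_simp
    _ ≤ (∫ x in m1..m2, |x - (m1 + m2) / 2| * |deriv G x|) / (m2 - m1) := by
        rw [abs_div, abs_of_pos (sub_pos.2 hlt)]
        gcongr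
        simpa only [abs_mul] using
          abs_integral_le_integral_abs (f := fun x ↦ (x - (m1 + m2) / 2) * deriv G x) hlt.le
    _ ≤ r * ((m2 - m1) ^ 2 / 4) / (m2 - m1) := by gcongr
    _ = (m2 - m1) / 4 * r := by field_simp

theorem trapezoid_pearce_pecaric (m1 m2 : ℝ) (G : ℝ → ℝ) (hlt : m1 < m2)
    (V : Set ℝ) (hV : IsOpen V) (hVI : Set.Icc m1 m2 ⊆ V)
    (hdiff : ∀ x ∈ V, DifferentiableAt ℝ G x)
    (hG' : IntervalIntegrable (deriv G) volume m1 m2)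
    (q : ℝ) (hq : 1 ≤ q)
    (hconv : ConvexOn ℝ (Set.Icc m1 m2) (fun x => |deriv G x| ^ q)) :
    |(G m1 + G m2) / 2 - (1 / (m2 - m1)) * ∫ x in m1..m2, G x| ≤
      ((m2 - m1) / 4) * ((|deriv G m1| ^ q + |deriv G m2| ^ q) / 2) ^ (1 / q) :=
  trapezoid_pearce_pecaric_general m1 m2 G hlt V hVI hdiff hG' q hq hconv
end

section
/- Let G : V ⊆ ℝ → ℝ be differentiable on the interior of V, m1 < m2, G' integrable. Then (1/(m2-m1)) ∫_{m1}^{m2} G(x) dx - G((m1+m2)/2) = (m2-m1) ∫_0^1 Q(ζ) G'(ζm1 + (1-ζ)m2) dζ, where Q(ζ) = ζ for ζ ∈ [0, 1/2) and Q(ζ) = ζ - 1 for ζ ∈ [1/2, 1]. -/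
/-!
With `u ζ = G (ζ m1 + (1 - ζ) m2)` we have `u' = (m1 - m2) G'(ζ m1 + (1 - ζ) m2)` and
`∫₀¹ u = (1 / (m2 - m1)) ∫_{m1}^{m2} G`, so the claim is the Montgomery identity
`∫₀¹ Q u' = u (1/2) - ∫₀¹ u`. On each side of the jump the kernel `Q` is affine with slope one
and vanishes at the outer endpoint, so integrating by parts on `[0, 1/2]` and on `[1/2, 1]`
produces the boundary term `(1/2) u (1/2)` twice, minus `∫₀¹ u`.
-/

open MeasureTheory intervalIntegral Set

noncomputable def montgomeryKernel (a b c t : ℝ) : ℝ := if t < c then t - a else t - b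

theorem integral_sub_mul_deriv {a b d : ℝ} {u u' : ℝ → ℝ}
    (hu : ∀ x ∈ uIcc a b, HasDerivAt u (u' x) x) (hu' : IntervalIntegrable u' volume a b) :
    ∫ x in a..b, (x - d) * u' x = (b - d) * u b - (a - d) * u a - ∫ x in a..b, u x := by
  simpa only [one_mul] using integral_mul_deriv_eq_deriv_mul
    (fun x _ => (hasDerivAt_id' x).sub_const d) hu intervalIntegrable_const hu'

theorem integral_zero_one_comp_affine (f : ℝ → ℝ) {a b : ℝ} (hab : a ≠ b) :
    ∫ ζ in (0:ℝ)..1, f (ζ * a + (1 - ζ) * b) = 1 / (b - a) * ∫ x in a..b, f x := by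
  have h : ∀ ζ : ℝ, ζ * a + (1 - ζ) * b = (a - b) * ζ + b := fun ζ => by ring
  simp only [h, integral_comp_mul_add f (sub_ne_zero.mpr hab), mul_zero, zero_add, mul_one,
    sub_add_cancel, smul_eq_mul, integral_symm a b]
  rw [mul_neg, ← neg_mul, ← inv_neg, neg_sub, one_div]

theorem IntervalIntegrable.comp_affine_zero_one {f : ℝ → ℝ} {a b : ℝ}
    (hf : IntervalIntegrable f volume a b) (hab : a ≠ b) :
    IntervalIntegrable (fun ζ => f (ζ * a + (1 - ζ) * b)) volume 0 1 := by
  have h := (hf.comp_add_right b).comp_mul_left (c := a - b)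
  rw [div_self (sub_ne_zero.mpr hab), sub_self, zero_div] at h
  convert h.symm using 3 with ζ
  ring

theorem integral_montgomeryKernel_mul_deriv {a b c : ℝ} {u u' : ℝ → ℝ} (hac : a ≤ c)
    (hcb : c ≤ b) (hu : ∀ x ∈ Icc a b, HasDerivAt u (u' x) x)
    (hu' : IntervalIntegrable u' volume a b) :
    ∫ t in a..b, montgomeryKernel a b c t * u' t = (b - a) * u c - ∫ t in a..b, u t := by
  have hc : c ∈ uIcc a b := Icc_subset_uIcc ⟨hac, hcb⟩
  have hsub_left : uIcc a c ⊆ Icc a b := uIcc_subset_Icc ⟨le_rfl, hac.trans hcb⟩ ⟨hac, hcb⟩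
  have hsub_right : uIcc c b ⊆ Icc a b := uIcc_subset_Icc ⟨hac, hcb⟩ ⟨hac.trans hcb, le_rfl⟩
  have hu_cont : ContinuousOn u (Icc a b) := fun x hx => (hu x hx).continuousAt.continuousWithinAt
  have hu'_left := hu'.mono_set (uIcc_subset_uIcc_left hc)
  have hu'_right := hu'.mono_set (uIcc_subset_uIcc_right hc)
  have hK_left : EqOn (fun t => (t - a) * u' t) (fun t => montgomeryKernel a b c t * u' t)
      (Ioo a c) := fun t ht => by simp [montgomeryKernel, ht.2]
  have hK_right : EqOn (fun t => montgomeryKernel a b c t * u' t) (fun t => (t - b) * u' t)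
      (uIcc c b) := fun t ht => by
    simp [montgomeryKernel, not_lt.mpr (uIcc_of_le hcb ▸ ht).1]
  have hint_left : IntervalIntegrable (fun t => montgomeryKernel a b c t * u' t) volume a c :=
    (hu'_left.continuousOn_mul (by fun_prop)).congr_uIoo (uIoo_of_le hac ▸ hK_left)
  have hint_right : IntervalIntegrable (fun t => montgomeryKernel a b c t * u' t) volume c b :=
    (hu'_right.continuousOn_mul (by fun_prop)).congr (hK_right.symm.mono uIoc_subset_uIcc)
  calc ∫ t in a..b, montgomeryKernel a b c t * u' t
      = (∫ t in a..c, (t - a) * u' t) + ∫ t in c..b, (t - b) * u' t := by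
        rw [← integral_add_adjacent_intervals hint_left hint_right,
          integral_congr_Ioo_of_le hac hK_left, integral_congr hK_right]
    _ = (c - a) * u c - (∫ t in a..c, u t) - (c - b) * u c - ∫ t in c..b, u t := by
        rw [integral_sub_mul_deriv (fun x hx => hu x (hsub_left hx)) hu'_left,
          integral_sub_mul_deriv (fun x hx => hu x (hsub_right hx)) hu'_right]
        ring
    _ = (b - a) * u c - ∫ t in a..b, u t := by
        rw [← integral_add_adjacent_intervals ((hu_cont.mono hsub_left).intervalIntegrable)
          ((hu_cont.mono hsub_right).intervalIntegrable)]
        ring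

theorem kirmaci_identity_general (m1 m2 : ℝ) (G : ℝ → ℝ) (hlt : m1 < m2)
    (V : Set ℝ) (hVI : Set.Icc m1 m2 ⊆ V)
    (hdiff : ∀ x ∈ V, DifferentiableAt ℝ G x)
    (hG' : IntervalIntegrable (deriv G) volume m1 m2)
    (Q : ℝ → ℝ) (hQ : ∀ ζ : ℝ, Q ζ = if ζ < 1 / 2 then ζ else ζ - 1) :
    (1 / (m2 - m1)) * (∫ x in m1..m2, G x) - G ((m1 + m2) / 2) =
      (m2 - m1) * ∫ ζ in (0:ℝ)..1, Q ζ * deriv G (ζ * m1 + (1 - ζ) * m2) := by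
  obtain rfl : Q = montgomeryKernel 0 1 (1 / 2) :=
    funext fun ζ => by simp [hQ, montgomeryKernel]
  have hu : ∀ ζ ∈ Icc (0:ℝ) 1, HasDerivAt (fun t => G (t * m1 + (1 - t) * m2))
      (deriv G (ζ * m1 + (1 - ζ) * m2) * (m1 - m2)) ζ := by
    intro ζ ⟨h0, h1⟩
    have hmem : ζ * m1 + (1 - ζ) * m2 ∈ V := hVI ⟨by nlinarith, by nlinarith⟩
    have haffine : HasDerivAt (fun t => t * m1 + (1 - t) * m2) (1 * m1 + -1 * m2) ζ :=
      ((hasDerivAt_id' ζ).mul_const m1).add (((hasDerivAt_id' ζ).const_sub 1).mul_const m2)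
    rw [show m1 - m2 = 1 * m1 + -1 * m2 by ring]
    exact (hdiff _ hmem).hasDerivAt.comp ζ haffine
  have hmontgomery := integral_montgomeryKernel_mul_deriv (c := 1 / 2) (by norm_num)
    (by norm_num) hu ((hG'.comp_affine_zero_one hlt.ne).mul_const _)
  simp only [← mul_assoc, intervalIntegral.integral_mul_const,
    integral_zero_one_comp_affine G hlt.ne] at hmontgomery
  rw [show (1 / 2 : ℝ) * m1 + (1 - 1 / 2) * m2 = (m1 + m2) / 2 by ring] at hmontgomery
  linear_combination hmontgomery

theorem kirmaci_identity (m1 m2 : ℝ) (G : ℝ → ℝ) (hlt : m1 < m2)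
    (V : Set ℝ) (hV : IsOpen V) (hVI : Set.Icc m1 m2 ⊆ V)
    (hdiff : ∀ x ∈ V, DifferentiableAt ℝ G x)
    (hG : IntervalIntegrable G volume m1 m2)
    (hG' : IntervalIntegrable (deriv G) volume m1 m2)
    (Q : ℝ → ℝ) (hQ : ∀ ζ : ℝ, Q ζ = if ζ < 1 / 2 then ζ else ζ - 1) :
    (1 / (m2 - m1)) * (∫ x in m1..m2, G x) - G ((m1 + m2) / 2) =
      (m2 - m1) * ∫ ζ in (0:ℝ)..1, Q ζ * deriv G (ζ * m1 + (1 - ζ) * m2) :=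
  kirmaci_identity_general m1 m2 G hlt V hVI hdiff hG' Q hQ
end
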